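/- arXiv:2408.12090 — 6 statements merged into one kernel-verified Lean document; each statement's English description precedes it below -/
import Mathlib

section
/- The Picard–Fuchs system of V_{(2,29)} is ℤ/2ℤ-equivariant under the coordinate swap: let σ(f)(z1,z2) = f(z2,z1) denote the swap of variables, and let P1 = δ1^3 + z1(δ1+δ2+1/3)(δ1+δ2+2/3)(δ1+δ2+1) and P2 = (δ1^2 − δ1δ2 + δ2^2) + (z1+z2)(δ1+δ2+1/3)(δ1+δ2+2/3). Then for every smooth function f of two variables: σ(P2(σ(f))) = P2(f), and σ(P1(σ(f))) = (δ1+δ2)(P2(f)) − P1(f). In particular the left ideal generated by P1 and P2 is invariant under the swap. -/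
/-- The logarithmic derivative `δ1 = z1 ∂/∂z1`. -/
noncomputable def del1 (f : ℂ × ℂ → ℂ) : ℂ × ℂ → ℂ :=
  fun p => p.1 * fderiv ℂ f p (1, 0)

/-- The logarithmic derivative `δ2 = z2 ∂/∂z2`. -/
noncomputable def del2 (f : ℂ × ℂ → ℂ) : ℂ × ℂ → ℂ :=
  fun p => p.2 * fderiv ℂ f p (0, 1)

/-- The first-order operator `δ1 + δ2 + c`. -/
noncomputable def Lop (c : ℂ) (f : ℂ × ℂ → ℂ) : ℂ × ℂ → ℂ :=
  fun p => del1 f p + del2 f p + c * f p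

/-- The first (rescaled) Picard-Fuchs operator of `V_{(2,29)}`:
`P1 = δ1^3 + z1 (δ1+δ2+1/3)(δ1+δ2+2/3)(δ1+δ2+1)`. -/
noncomputable def P1op (f : ℂ × ℂ → ℂ) : ℂ × ℂ → ℂ :=
  fun p => del1 (del1 (del1 f)) p + p.1 * Lop (1/3) (Lop (2/3) (Lop 1 f)) p

/-- The second (rescaled) Picard-Fuchs operator of `V_{(2,29)}`:
`P2 = (δ1^2 - δ1 δ2 + δ2^2) + (z1+z2)(δ1+δ2+1/3)(δ1+δ2+2/3)`. -/
noncomputable def P2op (f : ℂ × ℂ → ℂ) : ℂ × ℂ → ℂ :=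
  fun p => (del1 (del1 f) p - del1 (del2 f) p + del2 (del2 f) p)
    + (p.1 + p.2) * Lop (1/3) (Lop (2/3) f) p

/-- The coordinate swap `σ(f)(z1,z2) = f(z2,z1)`. -/
def swapOp (f : ℂ × ℂ → ℂ) : ℂ × ℂ → ℂ := fun p => f (p.2, p.1)

/-! Conjugation by the swap exchanges `δ1` and `δ2` and fixes each `δ1 + δ2 + c`; as `δ1` and
`δ2` commute on smooth functions, `σ P2 σ = P2`. For `P1`,
`(δ1+δ2) P2 = δ1³ + δ2³ + (z1+z2)(δ1+δ2+1/3)(δ1+δ2+2/3)(δ1+δ2+1) = P1 + σ P1 σ`: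
the quadratic part of `P2` gives `δ1³ + δ2³`, and `δ1+δ2` passes `z1+z2` at the cost of a
shift by `1`, after which `δ1+δ2+1` commutes with the other two factors. -/

section Swap

variable (f : ℂ × ℂ → ℂ)

lemma del1_swapOp : del1 (swapOp f) = swapOp (del2 f) := by
  funext p
  have h : swapOp f = f ∘ ContinuousLinearEquiv.prodComm ℂ ℂ ℂ := rfl
  simp [del1, del2, swapOp, h, ContinuousLinearEquiv.comp_right_fderiv, Prod.swap]

lemma del2_swapOp : del2 (swapOp f) = swapOp (del1 f) := by
  funext p
  have h : swapOp f = f ∘ ContinuousLinearEquiv.prodComm ℂ ℂ ℂ := rfl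
  simp [del1, del2, swapOp, h, ContinuousLinearEquiv.comp_right_fderiv, Prod.swap]

lemma Lop_swapOp (c : ℂ) : Lop c (swapOp f) = swapOp (Lop c f) := by
  funext p
  simp only [Lop, del1_swapOp, del2_swapOp, swapOp]
  ring

end Swap

section Smooth

variable {f : ℂ × ℂ → ℂ}

lemma contDiff_del1 (hf : ContDiff ℂ ⊤ f) : ContDiff ℂ ⊤ (del1 f) :=
  contDiff_fst.mul ((hf.fderiv_right le_top).clm_apply contDiff_const)

lemma contDiff_del2 (hf : ContDiff ℂ ⊤ f) : ContDiff ℂ ⊤ (del2 f) :=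
  contDiff_snd.mul ((hf.fderiv_right le_top).clm_apply contDiff_const)

lemma contDiff_Lop (c : ℂ) (hf : ContDiff ℂ ⊤ f) : ContDiff ℂ ⊤ (Lop c f) :=
  ((contDiff_del1 hf).add (contDiff_del2 hf)).add (contDiff_const.mul hf)

lemma del1_del2_comm (hf : ContDiff ℂ 2 f) : del1 (del2 f) = del2 (del1 f) := by
  funext p
  have hDf : Differentiable ℂ (fderiv ℂ f) :=
    (hf.fderiv_right (m := 1) le_rfl).differentiable one_ne_zero
  have hsymm := ((hf.contDiffAt (x := p)).isSymmSndFDerivAt (by simp)).eq (1, 0) (0, 1)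
  change p.1 * fderiv ℂ (fun q => q.2 * fderiv ℂ f q (0, 1)) p (1, 0)
    = p.2 * fderiv ℂ (fun q => q.1 * fderiv ℂ f q (1, 0)) p (0, 1)
  rw [fderiv_fun_mul differentiableAt_snd ((hDf p).clm_apply (differentiableAt_const _)),
    fderiv_fun_mul differentiableAt_fst ((hDf p).clm_apply (differentiableAt_const _)),
    fderiv_clm_apply (hDf p) (differentiableAt_const _),
    fderiv_clm_apply (hDf p) (differentiableAt_const _)]
  simp [fderiv_snd, fderiv_fst, hsymm]
  ring

end Smooth

section Linear

variable {g h : ℂ × ℂ → ℂ} {p : ℂ × ℂ}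

lemma del1_add (hg : DifferentiableAt ℂ g p) (hh : DifferentiableAt ℂ h p) :
    del1 (fun q => g q + h q) p = del1 g p + del1 h p := by
  simp [del1, fderiv_fun_add hg hh, mul_add]

lemma del2_add (hg : DifferentiableAt ℂ g p) (hh : DifferentiableAt ℂ h p) :
    del2 (fun q => g q + h q) p = del2 g p + del2 h p := by
  simp [del2, fderiv_fun_add hg hh, mul_add]

lemma del1_sub (hg : DifferentiableAt ℂ g p) (hh : DifferentiableAt ℂ h p) :
    del1 (fun q => g q - h q) p = del1 g p - del1 h p := by
  simp [del1, fderiv_fun_sub hg hh, mul_sub]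

lemma del2_sub (hg : DifferentiableAt ℂ g p) (hh : DifferentiableAt ℂ h p) :
    del2 (fun q => g q - h q) p = del2 g p - del2 h p := by
  simp [del2, fderiv_fun_sub hg hh, mul_sub]

lemma del1_const_mul (hg : DifferentiableAt ℂ g p) (c : ℂ) :
    del1 (fun q => c * g q) p = c * del1 g p := by
  simp [del1, fderiv_const_mul hg c]
  ring

lemma del2_const_mul (hg : DifferentiableAt ℂ g p) (c : ℂ) :
    del2 (fun q => c * g q) p = c * del2 g p := by
  simp [del2, fderiv_const_mul hg c]
  ring

lemma del1_fst_add_snd_mul (hg : DifferentiableAt ℂ g p) :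
    del1 (fun q => (q.1 + q.2) * g q) p = p.1 * g p + (p.1 + p.2) * del1 g p := by
  have hsum : HasFDerivAt (fun q : ℂ × ℂ => q.1 + q.2)
      (ContinuousLinearMap.fst ℂ ℂ ℂ + ContinuousLinearMap.snd ℂ ℂ ℂ) p :=
    hasFDerivAt_fst.add hasFDerivAt_snd
  simp [del1, fderiv_fun_mul hsum.differentiableAt hg, hsum.fderiv]
  ring

lemma del2_fst_add_snd_mul (hg : DifferentiableAt ℂ g p) :
    del2 (fun q => (q.1 + q.2) * g q) p = p.2 * g p + (p.1 + p.2) * del2 g p := by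
  have hsum : HasFDerivAt (fun q : ℂ × ℂ => q.1 + q.2)
      (ContinuousLinearMap.fst ℂ ℂ ℂ + ContinuousLinearMap.snd ℂ ℂ ℂ) p :=
    hasFDerivAt_fst.add hasFDerivAt_snd
  simp [del2, fderiv_fun_mul hsum.differentiableAt hg, hsum.fderiv]
  ring

end Linear

section Operators

variable {f : ℂ × ℂ → ℂ}

lemma del1_Lop (hf : ContDiff ℂ ⊤ f) (c : ℂ) (p : ℂ × ℂ) :
    del1 (Lop c f) p = del1 (del1 f) p + del1 (del2 f) p + c * del1 f p := by
  have hd1 := (contDiff_del1 hf).differentiable (by simp) p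
  have hd2 := (contDiff_del2 hf).differentiable (by simp) p
  have hd := hf.differentiable (by simp) p
  change del1 (fun q => (del1 f q + del2 f q) + c * f q) p = _
  rw [del1_add (hd1.fun_add hd2) (hd.const_mul c), del1_add hd1 hd2, del1_const_mul hd]

lemma del2_Lop (hf : ContDiff ℂ ⊤ f) (c : ℂ) (p : ℂ × ℂ) :
    del2 (Lop c f) p = del2 (del1 f) p + del2 (del2 f) p + c * del2 f p := by
  have hd1 := (contDiff_del1 hf).differentiable (by simp) p
  have hd2 := (contDiff_del2 hf).differentiable (by simp) p
  have hd := hf.differentiable (by simp) p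
  change del2 (fun q => (del1 f q + del2 f q) + c * f q) p = _
  rw [del2_add (hd1.fun_add hd2) (hd.const_mul c), del2_add hd1 hd2, del2_const_mul hd]

lemma Lop_comm (hf : ContDiff ℂ ⊤ f) (a b : ℂ) : Lop a (Lop b f) = Lop b (Lop a f) := by
  funext p
  simp only [Lop, del1_Lop hf, del2_Lop hf, del1_del2_comm (hf.of_le le_top)]
  ring

lemma del1_add_del2_sq_sub_mul_add_sq (hf : ContDiff ℂ ⊤ f) (p : ℂ × ℂ) :
    del1 (fun q => del1 (del1 f) q - del1 (del2 f) q + del2 (del2 f) q) p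
      + del2 (fun q => del1 (del1 f) q - del1 (del2 f) q + del2 (del2 f) q) p
      = del1 (del1 (del1 f)) p + del2 (del2 (del2 f)) p := by
  have h1 := contDiff_del1 hf
  have h2 := contDiff_del2 hf
  have d11 := (contDiff_del1 h1).differentiable (by simp) p
  have d12 := (contDiff_del1 h2).differentiable (by simp) p
  have d22 := (contDiff_del2 h2).differentiable (by simp) p
  have comm : ∀ {g : ℂ × ℂ → ℂ}, ContDiff ℂ ⊤ g → del1 (del2 g) = del2 (del1 g) :=
    fun hg => del1_del2_comm (hg.of_le le_top)
  rw [del1_add (d11.fun_sub d12) d22, del2_add (d11.fun_sub d12) d22, del1_sub d11 d12,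
    del2_sub d11 d12, comm h2, comm hf, comm h1]
  ring

lemma del1_add_del2_fst_add_snd_mul {p : ℂ × ℂ} (hf : DifferentiableAt ℂ f p) :
    del1 (fun q => (q.1 + q.2) * f q) p + del2 (fun q => (q.1 + q.2) * f q) p
      = (p.1 + p.2) * Lop 1 f p := by
  rw [del1_fst_add_snd_mul hf, del2_fst_add_snd_mul hf, Lop]
  ring

lemma del1_add_del2_P2op (hf : ContDiff ℂ ⊤ f) (p : ℂ × ℂ) :
    del1 (P2op f) p + del2 (P2op f) p
      = del1 (del1 (del1 f)) p + del2 (del2 (del2 f)) p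
        + (p.1 + p.2) * Lop (1/3) (Lop (2/3) (Lop 1 f)) p := by
  have hQ : ContDiff ℂ ⊤ (Lop (1/3) (Lop (2/3) f)) := contDiff_Lop _ (contDiff_Lop _ hf)
  have dQ := hQ.differentiable (by simp)
  have dA : Differentiable ℂ (fun q => del1 (del1 f) q - del1 (del2 f) q + del2 (del2 f) q) := by
    have h1 := contDiff_del1 hf
    have h2 := contDiff_del2 hf
    exact (((contDiff_del1 h1).sub (contDiff_del1 h2)).add (contDiff_del2 h2)).differentiable
      (by simp)
  have dB : Differentiable ℂ (fun q => (q.1 + q.2) * Lop (1/3) (Lop (2/3) f) q) :=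
    (differentiable_fst.add differentiable_snd).mul dQ
  have hLop1 : Lop 1 (Lop (1/3) (Lop (2/3) f)) = Lop (1/3) (Lop (2/3) (Lop 1 f)) := by
    rw [Lop_comm (contDiff_Lop _ hf), Lop_comm hf 1]
  change del1 (fun q => _ + _) p + del2 (fun q => _ + _) p = _
  rw [del1_add (dA p) (dB p), del2_add (dA p) (dB p), ← hLop1]
  linear_combination del1_add_del2_sq_sub_mul_add_sq hf p
    + del1_add_del2_fst_add_snd_mul (dQ p)

lemma swapOp_P2op (hf : ContDiff ℂ ⊤ f) : swapOp (P2op (swapOp f)) = P2op f := by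
  funext p
  simp only [P2op, swapOp, del1_swapOp, del2_swapOp, Lop_swapOp, del1_del2_comm (hf.of_le le_top)]
  ring

lemma swapOp_P1op (f : ℂ × ℂ → ℂ) :
    swapOp (P1op (swapOp f))
      = fun p => del2 (del2 (del2 f)) p + p.2 * Lop (1/3) (Lop (2/3) (Lop 1 f)) p := by
  funext p
  simp only [P1op, swapOp, del1_swapOp, Lop_swapOp]

end Operators

/-- The Picard-Fuchs system of `V_{(2,29)}` is `ℤ/2ℤ`-equivariant under the coordinate
swap: `σ(P2(σ f)) = P2 f` and `σ(P1(σ f)) = (δ1+δ2)(P2 f) - P1 f`. -/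
theorem V229_PicardFuchs_Z2_equivariant (f : ℂ × ℂ → ℂ) (hf : ContDiff ℂ ⊤ f) :
    swapOp (P2op (swapOp f)) = P2op f ∧
    swapOp (P1op (swapOp f)) =
      fun p => del1 (P2op f) p + del2 (P2op f) p - P1op f p := by
  refine ⟨swapOp_P2op hf, funext fun p => ?_⟩
  rw [swapOp_P1op, del1_add_del2_P2op hf, P1op]
  ring
end

section
/- The Yukawa couplings of V_{(2,29)} are determined by K^{3,0}: let z1, z2, K30, K21, K12, K03 be complex numbers with z1 ≠ 0 and z1 + z2 ≠ 2, satisfying the three linear relations (1+z1)K30 + 3z1·K21 + 3z1·K12 + z1·K03 = 0, (z1+z2+1)K30 + (2z1+2z2−1)K21 + (z1+z2+1)K12 = 0, and (z1+z2+1)K21 + (2z1+2z2−1)K12 + (z1+z2+1)K03 = 0. Then 3z1(z1+z2−2)·K21 = (−2z1² − z1z2 − z1 + z2² + 2z2 + 1)·K30, 3z1(z1+z2−2)·K12 = (z1² − z1z2 − 2z2² + 2z1 − z2 + 1)·K30, and z1·K03 = z2·K30. -/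
theorem V229_Yukawa_couplings_general (z1 z2 K30 K21 K12 K03 : ℂ)
    (e1 : (1 + z1) * K30 + 3 * z1 * K21 + 3 * z1 * K12 + z1 * K03 = 0)
    (e2 : (z1 + z2 + 1) * K30 + (2*z1 + 2*z2 - 1) * K21 + (z1 + z2 + 1) * K12 = 0)
    (e3 : (z1 + z2 + 1) * K21 + (2*z1 + 2*z2 - 1) * K12 + (z1 + z2 + 1) * K03 = 0) :
    3 * z1 * (z1 + z2 - 2) * K21
        = (-2*z1^2 - z1*z2 - z1 + z2^2 + 2*z2 + 1) * K30 ∧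
    3 * z1 * (z1 + z2 - 2) * K12
        = (z1^2 - z1*z2 - 2*z2^2 + 2*z1 - z2 + 1) * K30 ∧
    z1 * K03 = z2 * K30 := by
  refine ⟨?_, ?_, ?_⟩
  · linear_combination (-(z1 + z2 + 1)^2) * e1 + z1 * (z1 + z2 + 4) * e2
      + z1 * (z1 + z2 + 1) * e3
  · linear_combination ((z1 + z2 + 1) * (2*z1 + 2*z2 - 1)) * e1
      + (-2 * z1 * (z1 + z2 + 1)) * e2 + (-z1 * (2*z1 + 2*z2 - 1)) * e3
  -- `e2 + e3` and `e1` involve `K21, K12` only through `K21 + K12`, with coefficients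
  -- `3 (z1 + z2)` and `3 z1`; eliminating that sum leaves `z1 K03 - z2 K30`.
  · linear_combination (-(z1 + z2)) * e1 + z1 * e2 + z1 * e3

/-- The Yukawa couplings of `V_{(2,29)}` are determined by `K^{3,0}` via the
linear relations coming from the Picard-Fuchs operators and Griffiths transversality. -/
theorem V229_Yukawa_couplings (z1 z2 K30 K21 K12 K03 : ℂ)
    (hz1 : z1 ≠ 0) (hz : z1 + z2 ≠ 2)
    (e1 : (1 + z1) * K30 + 3 * z1 * K21 + 3 * z1 * K12 + z1 * K03 = 0)
    (e2 : (z1 + z2 + 1) * K30 + (2*z1 + 2*z2 - 1) * K21 + (z1 + z2 + 1) * K12 = 0)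
    (e3 : (z1 + z2 + 1) * K21 + (2*z1 + 2*z2 - 1) * K12 + (z1 + z2 + 1) * K03 = 0) :
    3 * z1 * (z1 + z2 - 2) * K21
        = (-2*z1^2 - z1*z2 - z1 + z2^2 + 2*z2 + 1) * K30 ∧
    3 * z1 * (z1 + z2 - 2) * K12
        = (z1^2 - z1*z2 - 2*z2^2 + 2*z1 - z2 + 1) * K30 ∧
    z1 * K03 = z2 * K30 :=
  V229_Yukawa_couplings_general z1 z2 K30 K21 K12 K03 e1 e2 e3
end

section
/- The Yukawa coupling K^{3,0} of V_{(2,38)} equals a constant multiple of the discriminant: let D(z1,z2) = (1+z1)³ + z1³ z2, and let U ⊆ ℂ² be a nonempty connected open set on which z1 ≠ 0, z2 ≠ 0 and D ≠ 0. A holomorphic function K : U → ℂ satisfies the system z1·∂K/∂z1 = (z1(3 + 6z1 + 3z1² + 3z1² z2)/D)·K and z2·∂K/∂z2 = (z1³ z2 / D)·K on U if and only if there is a constant c ∈ ℂ with K(z1,z2) = c·D(z1,z2) for all (z1,z2) ∈ U. -/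
/-!
Away from `z₁ = 0` and `z₂ = 0` the two equations say exactly that `D • dK = K • dD` as linear
forms, i.e. that `d(K / D) = 0`; on a connected open set where `D ≠ 0` this means `K / D` is
constant.
-/

open Filter Topology

section Proportional

variable {𝕜 E : Type*} [NontriviallyNormedField 𝕜] [NormedAddCommGroup E] [NormedSpace 𝕜 E]
  {f g : E → 𝕜} {U : Set E}

theorem HasFDerivAt.fun_div {f' g' : E →L[𝕜] 𝕜} {x : E}
    (hf : HasFDerivAt f f' x) (hg : HasFDerivAt g g' x) (hx : g x ≠ 0) :
    HasFDerivAt (fun y => f y / g y) ((g x ^ 2)⁻¹ • (g x • f' - f x • g')) x := by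
  have hinv : HasFDerivAt (fun y => (g y)⁻¹) (-(g x ^ 2)⁻¹ • g') x :=
    ((hasFDerivAt_inv hx).comp x hg).congr_fderiv <| by ext v; simp [mul_comm]
  simp_rw [div_eq_mul_inv]
  refine (hf.fun_mul hinv).congr_fderiv ?_
  ext v
  simp only [add_apply, smul_apply, smul_eq_mul, neg_mul, mul_neg, sub_apply]
  field_simp
  ring

theorem smul_fderiv_eq_of_eqOn_const_mul (hU : IsOpen U) (hg : DifferentiableOn 𝕜 g U) {c : 𝕜}
    (hfg : ∀ x ∈ U, f x = c * g x) {x : E} (hx : x ∈ U) :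
    g x • fderiv 𝕜 f x = f x • fderiv 𝕜 g x := by
  have hloc : f =ᶠ[𝓝 x] fun y => c * g y :=
    eventually_of_mem (hU.mem_nhds hx) hfg
  rw [hloc.fderiv_eq, fderiv_const_mul (hg.differentiableAt (hU.mem_nhds hx)), hfg x hx,
    smul_smul, mul_comm]

theorem IsOpen.exists_eq_const_mul_of_smul_fderiv_eq [NormedSpace ℝ E] [IsRCLikeNormedField 𝕜]
    (hU : IsOpen U) (hU' : IsPreconnected U) (hf : DifferentiableOn 𝕜 f U)
    (hg : DifferentiableOn 𝕜 g U) (hg0 : ∀ x ∈ U, g x ≠ 0)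
    (hW : ∀ x ∈ U, g x • fderiv 𝕜 f x = f x • fderiv 𝕜 g x) :
    ∃ c, ∀ x ∈ U, f x = c * g x := by
  have hquot : ∀ x ∈ U, HasFDerivAt (fun y => f y / g y) (0 : E →L[𝕜] 𝕜) x := fun x hx => by
    have hxU := hU.mem_nhds hx
    simpa only [hW x hx, sub_self, smul_zero] using
      (hf.differentiableAt hxU).hasFDerivAt.fun_div (hg.differentiableAt hxU).hasFDerivAt
        (hg0 x hx)
  obtain ⟨c, hc⟩ := hU.exists_is_const_of_fderiv_eq_zero hU'
    (fun x hx => (hquot x hx).differentiableAt.differentiableWithinAt)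
    (fun x hx => (hquot x hx).fderiv)
  exact ⟨c, fun x hx => by rw [← hc x hx, div_mul_cancel₀ _ (hg0 x hx)]⟩

theorem IsOpen.exists_eq_const_mul_iff_smul_fderiv_eq [NormedSpace ℝ E] [IsRCLikeNormedField 𝕜]
    (hU : IsOpen U) (hU' : IsPreconnected U) (hf : DifferentiableOn 𝕜 f U)
    (hg : DifferentiableOn 𝕜 g U) (hg0 : ∀ x ∈ U, g x ≠ 0) :
    (∃ c, ∀ x ∈ U, f x = c * g x) ↔ ∀ x ∈ U, g x • fderiv 𝕜 f x = f x • fderiv 𝕜 g x :=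
  ⟨fun ⟨_, hc⟩ _ hx => smul_fderiv_eq_of_eqOn_const_mul hU hg hc hx,
    hU.exists_eq_const_mul_of_smul_fderiv_eq hU' hf hg hg0⟩

end Proportional

def discriminantV238 (p : ℂ × ℂ) : ℂ := (1 + p.1) ^ 3 + p.1 ^ 3 * p.2

theorem hasFDerivAt_discriminantV238 (p : ℂ × ℂ) :
    HasFDerivAt discriminantV238
      ((3 * (1 + p.1) ^ 2 + 3 * p.1 ^ 2 * p.2) • ContinuousLinearMap.fst ℂ ℂ ℂ
        + p.1 ^ 3 • ContinuousLinearMap.snd ℂ ℂ ℂ) p := by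
  have hz1 : HasFDerivAt (fun q : ℂ × ℂ => q.1) (ContinuousLinearMap.fst ℂ ℂ ℂ) p :=
    hasFDerivAt_fst
  have hz2 : HasFDerivAt (fun q : ℂ × ℂ => q.2) (ContinuousLinearMap.snd ℂ ℂ ℂ) p :=
    hasFDerivAt_snd
  refine (((hz1.const_add 1).pow 3).add ((hz1.pow 3).fun_mul hz2)).congr_fderiv ?_
  ext <;> simp [mul_comm]

theorem ContinuousLinearMap.prod_ring_ext_iff {𝕜 F : Type*} [NontriviallyNormedField 𝕜]
    [NormedAddCommGroup F] [NormedSpace 𝕜 F] {L M : 𝕜 × 𝕜 →L[𝕜] F} :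
    L = M ↔ L (1, 0) = M (1, 0) ∧ L (0, 1) = M (0, 1) :=
  ⟨fun h => h ▸ ⟨rfl, rfl⟩, fun ⟨h1, h2⟩ => by ext <;> assumption⟩

theorem yukawa_system_iff_smul_fderiv_eq {p : ℂ × ℂ} (h1 : p.1 ≠ 0) (h2 : p.2 ≠ 0)
    (hD : (1 + p.1) ^ 3 + p.1 ^ 3 * p.2 ≠ 0) (L : ℂ × ℂ →L[ℂ] ℂ) (k : ℂ) :
    (p.1 * L (1, 0) =
        (p.1 * (3 + 6*p.1 + 3*p.1^2 + 3*p.1^2*p.2) / ((1 + p.1)^3 + p.1^3 * p.2)) * k ∧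
      p.2 * L (0, 1) = (p.1^3 * p.2 / ((1 + p.1)^3 + p.1^3 * p.2)) * k) ↔
    discriminantV238 p • L = k • fderiv ℂ discriminantV238 p := by
  rw [(hasFDerivAt_discriminantV238 p).fderiv, ContinuousLinearMap.prod_ring_ext_iff]
  simp only [smul_apply, smul_eq_mul, smul_add, add_apply, ContinuousLinearMap.coe_fst', mul_one,
    ContinuousLinearMap.coe_snd', mul_zero, add_zero, zero_add]
  rw [div_mul_eq_mul_div, eq_div_iff hD, div_mul_eq_mul_div, eq_div_iff hD]
  unfold discriminantV238
  exact and_congr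
    ⟨fun h => mul_left_cancel₀ h1 (by linear_combination h), fun h => by linear_combination p.1 * h⟩
    ⟨fun h => mul_left_cancel₀ h2 (by linear_combination h), fun h => by linear_combination p.2 * h⟩

theorem V238_Yukawa_is_discriminant_general (U : Set (ℂ × ℂ)) (hUopen : IsOpen U)
    (hUconn : IsConnected U)
    (hz1 : ∀ p ∈ U, p.1 ≠ 0) (hz2 : ∀ p ∈ U, p.2 ≠ 0)
    (hD : ∀ p ∈ U, (1 + p.1)^3 + p.1^3 * p.2 ≠ 0)
    (K : ℂ × ℂ → ℂ) (hK : DifferentiableOn ℂ K U) :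
    ((∀ p ∈ U, p.1 * fderiv ℂ K p (1, 0) =
        (p.1 * (3 + 6*p.1 + 3*p.1^2 + 3*p.1^2*p.2) / ((1 + p.1)^3 + p.1^3 * p.2)) * K p) ∧
     (∀ p ∈ U, p.2 * fderiv ℂ K p (0, 1) =
        (p.1^3 * p.2 / ((1 + p.1)^3 + p.1^3 * p.2)) * K p))
    ↔ ∃ c : ℂ, ∀ p ∈ U, K p = c * ((1 + p.1)^3 + p.1^3 * p.2) := by
  have hDdiff : DifferentiableOn ℂ discriminantV238 U := fun p _ =>
    (hasFDerivAt_discriminantV238 p).differentiableAt.differentiableWithinAt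
  change _ ↔ ∃ c : ℂ, ∀ p ∈ U, K p = c * discriminantV238 p
  rw [hUopen.exists_eq_const_mul_iff_smul_fderiv_eq hUconn.isPreconnected hK hDdiff hD,
    ← forall₂_and]
  exact forall₂_congr fun p hp =>
    yukawa_system_iff_smul_fderiv_eq (hz1 p hp) (hz2 p hp) (hD p hp) _ _

/-- The Yukawa coupling `K^{3,0}` of `V_{(2,38)}` equals a constant multiple of the
discriminant `D(z1,z2) = (1+z1)^3 + z1^3 z2`: a holomorphic function on a nonempty
connected open set avoiding `{z1 = 0}`, `{z2 = 0}` and `{D = 0}` satisfies the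
first-order system iff it is a constant multiple of `D`. -/
theorem V238_Yukawa_is_discriminant (U : Set (ℂ × ℂ)) (hUopen : IsOpen U)
    (hUne : U.Nonempty) (hUconn : IsConnected U)
    (hz1 : ∀ p ∈ U, p.1 ≠ 0) (hz2 : ∀ p ∈ U, p.2 ≠ 0)
    (hD : ∀ p ∈ U, (1 + p.1)^3 + p.1^3 * p.2 ≠ 0)
    (K : ℂ × ℂ → ℂ) (hK : DifferentiableOn ℂ K U) :
    ((∀ p ∈ U, p.1 * fderiv ℂ K p (1, 0) =
        (p.1 * (3 + 6*p.1 + 3*p.1^2 + 3*p.1^2*p.2) / ((1 + p.1)^3 + p.1^3 * p.2)) * K p) ∧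
     (∀ p ∈ U, p.2 * fderiv ℂ K p (0, 1) =
        (p.1^3 * p.2 / ((1 + p.1)^3 + p.1^3 * p.2)) * K p))
    ↔ ∃ c : ℂ, ∀ p ∈ U, K p = c * ((1 + p.1)^3 + p.1^3 * p.2) :=
  V238_Yukawa_is_discriminant_general U hUopen hUconn hz1 hz2 hD K hK
end

section
/- The symmetry group of the fan of V_{(2,29)} has order 36: the set G of permutations σ of {1,…,6} for which there exists a matrix M ∈ GL₄(ℤ) with M·v_i = v_{σ(i)} for all i = 1,…,6 is a subgroup of the symmetric group S₆; G has exactly 36 elements and is generated by the permutations a = (2 3 4), b = (3 4)(5 6), and c = (1 2)(3 5)(4 6). -/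
open Matrix

/-- The primitive ray generators of the fan `Σ` of the family `V_{(2,29)}`. -/
def rayGen : Fin 6 → Fin 4 → ℤ :=
  ![![1,0,0,0], ![0,1,0,0], ![0,0,1,0], ![0,-1,-1,0], ![1,1,2,3], ![-2,-1,-2,-3]]

/-- The set of permutations of the rays realized by a lattice automorphism. -/
def fanSymmetries : Set (Equiv.Perm (Fin 6)) :=
  {σ | ∃ M : GL (Fin 4) ℤ,
    ∀ i : Fin 6, (M : Matrix (Fin 4) (Fin 4) ℤ).mulVec (rayGen i) = rayGen (σ i)}

/-!
The rays satisfy `v₁ + v₂ + v₃ = 0` and `v₀ + v₄ + v₅ = 0` (indices from 0), and `v₀, v₁, v₂, v₄`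
span a sublattice of index 3 with `e₃ = (v₄ - v₀ - v₁ - 2 v₂) / 3`. Hence a permutation `σ` is
induced by an integer matrix iff it preserves both relations and sends `v₄ - v₀ - v₁ - 2 v₂` into
`3 ℤ⁴`. Such a matrix is automatically in `GL₄(ℤ)`: its `orderOf σ`-th power fixes every ray, so it
is the identity. What remains is a finite check over `S₆`: the 36 solutions are the products
`a^i (c a c)^j b^k c^l`, where `a` and `c a c` rotate the triangles `{1, 2, 3}` and `{0, 4, 5}`
and the commuting involutions `b`, `c` act on them.
-/

namespace V229

open Equiv

variable {M N : Matrix (Fin 4) (Fin 4) ℤ} {σ τ : Perm (Fin 6)}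

def Realizes (M : Matrix (Fin 4) (Fin 4) ℤ) (σ : Perm (Fin 6)) : Prop :=
  ∀ i, M *ᵥ rayGen i = rayGen (σ i)

theorem Realizes.one : Realizes 1 1 := fun _ => one_mulVec _

theorem Realizes.mul (hM : Realizes M σ) (hN : Realizes N τ) : Realizes (M * N) (σ * τ) :=
  fun i => by rw [← mulVec_mulVec, hN, hM, Perm.mul_apply]

theorem Realizes.pow (h : Realizes M σ) (n : ℕ) : Realizes (M ^ n) (σ ^ n) := by
  induction n with
  | zero => exact Realizes.one
  | succ n ih => rw [pow_succ, pow_succ]; exact ih.mul h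

theorem Realizes.of_mul_eq_one (h : Realizes M σ) (hNM : N * M = 1) : Realizes N σ⁻¹ :=
  fun i => calc
    N *ᵥ rayGen i = N *ᵥ (M *ᵥ rayGen (σ⁻¹ i)) := by rw [h, Perm.coe_inv, apply_symm_apply]
    _ = rayGen (σ⁻¹ i) := by rw [mulVec_mulVec, hNM, one_mulVec]

theorem rayGen_three : rayGen 3 = -(rayGen 1 + rayGen 2) := by decide

theorem rayGen_five : rayGen 5 = -(rayGen 0 + rayGen 4) := by decide

theorem mulVec_rayGen_apply (M : Matrix (Fin 4) (Fin 4) ℤ) (k : Fin 4) :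
    (M *ᵥ rayGen 0) k = M k 0 ∧ (M *ᵥ rayGen 1) k = M k 1 ∧ (M *ᵥ rayGen 2) k = M k 2 ∧
      (M *ᵥ rayGen 4) k = M k 0 + M k 1 + 2 * M k 2 + 3 * M k 3 := by
  simp only [mulVec, dotProduct, rayGen, Fin.sum_univ_four, cons_val', cons_val_fin_one,
    cons_val_zero, cons_val_one, cons_val, mul_zero, mul_one, add_zero, zero_add, true_and]
  ring

-- `/ 3` is integer division; it is exact iff `σ` maps `v₄ - v₀ - v₁ - 2 v₂` into `3 ℤ⁴`.
def realizingMatrix (σ : Perm (Fin 6)) : Matrix (Fin 4) (Fin 4) ℤ :=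
  of fun k => ![rayGen (σ 0) k, rayGen (σ 1) k, rayGen (σ 2) k,
    (rayGen (σ 4) k - rayGen (σ 0) k - rayGen (σ 1) k - 2 * rayGen (σ 2) k) / 3]

theorem Realizes.eq_realizingMatrix (h : Realizes M σ) : M = realizingMatrix σ := by
  ext k j
  obtain ⟨h0, h1, h2, h4⟩ := mulVec_rayGen_apply M k
  rw [h] at h0 h1 h2 h4
  fin_cases j <;>
    simp only [Fin.zero_eta, Fin.mk_one, Fin.reduceFinMk, realizingMatrix, of_apply,
      cons_val_zero, cons_val_one, cons_val] <;>
    omega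

theorem Realizes.pow_orderOf_eq_one (h : Realizes M σ) : M ^ orderOf σ = 1 := by
  have hpow := h.pow (orderOf σ)
  rw [_root_.pow_orderOf_eq_one] at hpow
  exact hpow.eq_realizingMatrix.trans Realizes.one.eq_realizingMatrix.symm

theorem Realizes.isUnit (h : Realizes M σ) : IsUnit M :=
  IsUnit.of_pow_eq_one h.pow_orderOf_eq_one (orderOf_pos σ).ne'

def PreservesRelations (σ : Perm (Fin 6)) : Prop :=
  rayGen (σ 1) + rayGen (σ 2) + rayGen (σ 3) = 0 ∧
    rayGen (σ 0) + rayGen (σ 4) + rayGen (σ 5) = 0 ∧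
    ∀ k, (3 : ℤ) ∣ rayGen (σ 4) k - rayGen (σ 0) k - rayGen (σ 1) k - 2 * rayGen (σ 2) k

instance : DecidablePred PreservesRelations := fun _ =>
  inferInstanceAs (Decidable (_ ∧ _ ∧ _))

theorem Realizes.preservesRelations (h : Realizes M σ) : PreservesRelations σ := by
  refine ⟨?_, ?_, fun k => ?_⟩
  · rw [← h, ← h, ← h, rayGen_three, mulVec_neg, mulVec_add]; abel
  · rw [← h, ← h, ← h, rayGen_five, mulVec_neg, mulVec_add]; abel
  · obtain ⟨h0, h1, h2, h4⟩ := mulVec_rayGen_apply M k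
    rw [h] at h0 h1 h2 h4
    omega

theorem PreservesRelations.realizes (h : PreservesRelations σ) :
    Realizes (realizingMatrix σ) σ := by
  obtain ⟨hrel₁, hrel₂, hdvd⟩ := h
  have hcols (k : Fin 4) :
      (realizingMatrix σ *ᵥ rayGen 0) k = rayGen (σ 0) k ∧
      (realizingMatrix σ *ᵥ rayGen 1) k = rayGen (σ 1) k ∧
      (realizingMatrix σ *ᵥ rayGen 2) k = rayGen (σ 2) k ∧
      (realizingMatrix σ *ᵥ rayGen 4) k = rayGen (σ 4) k := by
    have := hdvd k
    simp only [mulVec_rayGen_apply, realizingMatrix, of_apply, cons_val_zero, cons_val_one,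
      cons_val, true_and]
    omega
  have e0 := funext fun k => (hcols k).1
  have e1 := funext fun k => (hcols k).2.1
  have e2 := funext fun k => (hcols k).2.2.1
  have e4 := funext fun k => (hcols k).2.2.2
  have e3 : realizingMatrix σ *ᵥ rayGen 3 = rayGen (σ 3) := by
    rw [rayGen_three, mulVec_neg, mulVec_add, e1, e2]
    exact neg_eq_of_add_eq_zero_right hrel₁
  have e5 : realizingMatrix σ *ᵥ rayGen 5 = rayGen (σ 5) := by
    rw [rayGen_five, mulVec_neg, mulVec_add, e0, e4]
    exact neg_eq_of_add_eq_zero_right hrel₂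
  intro i
  fin_cases i
  exacts [e0, e1, e2, e3, e4, e5]

theorem mem_fanSymmetries_iff : σ ∈ fanSymmetries ↔ PreservesRelations σ :=
  ⟨fun ⟨_, hM⟩ => Realizes.preservesRelations hM,
    fun h => ⟨h.realizes.isUnit.unit, h.realizes⟩⟩

def fanSymmetryGroup : Subgroup (Perm (Fin 6)) where
  carrier := fanSymmetries
  one_mem' := ⟨1, Realizes.one⟩
  mul_mem' := fun ⟨M, hM⟩ ⟨N, hN⟩ => ⟨M * N, Realizes.mul hM hN⟩
  inv_mem' := fun ⟨M, hM⟩ => ⟨M⁻¹, Realizes.of_mul_eq_one hM M.inv_mul⟩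

def genA : Perm (Fin 6) := swap 1 2 * swap 2 3

def genB : Perm (Fin 6) := swap 2 3 * swap 4 5

def genC : Perm (Fin 6) := swap 0 1 * swap 2 4 * swap 3 5

def word (x : Fin 3 × Fin 3 × Fin 2 × Fin 2) : Perm (Fin 6) :=
  genA ^ (x.1 : ℕ) * (genC * genA * genC) ^ (x.2.1 : ℕ) * genB ^ (x.2.2.1 : ℕ) *
    genC ^ (x.2.2.2 : ℕ)

set_option maxRecDepth 10000 in
theorem exists_word_eq_of_preservesRelations :
    ∀ σ, PreservesRelations σ → ∃ x, word x = σ := by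
  decide

set_option maxRecDepth 10000 in
theorem word_injective : Function.Injective word := by
  decide

theorem word_mem_closure (x : Fin 3 × Fin 3 × Fin 2 × Fin 2) :
    word x ∈ Subgroup.closure {genA, genB, genC} := by
  have ha : genA ∈ Subgroup.closure {genA, genB, genC} :=
    Subgroup.subset_closure (Set.mem_insert _ _)
  have hb : genB ∈ Subgroup.closure {genA, genB, genC} :=
    Subgroup.subset_closure (Set.mem_insert_of_mem _ (Set.mem_insert _ _))
  have hc : genC ∈ Subgroup.closure {genA, genB, genC} :=
    Subgroup.subset_closure (Set.mem_insert_of_mem _ (Set.mem_insert_of_mem _ rfl))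
  exact mul_mem (mul_mem (mul_mem (pow_mem ha _) (pow_mem (mul_mem (mul_mem hc ha) hc) _))
    (pow_mem hb _)) (pow_mem hc _)

theorem closure_le_fanSymmetryGroup : Subgroup.closure {genA, genB, genC} ≤ fanSymmetryGroup := by
  rw [Subgroup.closure_le]
  rintro _ (rfl | rfl | rfl) <;> exact mem_fanSymmetries_iff.2 (by decide)

theorem coe_fanSymmetryGroup : (fanSymmetryGroup : Set (Perm (Fin 6))) = Set.range word := by
  refine Set.Subset.antisymm (fun σ hσ => ?_) ?_
  · exact exists_word_eq_of_preservesRelations σ (mem_fanSymmetries_iff.1 hσ)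
  · rintro _ ⟨x, rfl⟩
    exact closure_le_fanSymmetryGroup (word_mem_closure x)

theorem fanSymmetryGroup_eq_closure : fanSymmetryGroup = Subgroup.closure {genA, genB, genC} := by
  refine le_antisymm (fun σ hσ => ?_) closure_le_fanSymmetryGroup
  rw [← SetLike.mem_coe, coe_fanSymmetryGroup] at hσ
  obtain ⟨x, rfl⟩ := hσ
  exact word_mem_closure x

theorem card_fanSymmetryGroup : Nat.card fanSymmetryGroup = 36 := by
  rw [← SetLike.coe_sort_coe, coe_fanSymmetryGroup, Nat.card_range_of_injective word_injective]
  simp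

end V229

/-- The symmetry group of the fan of `V_{(2,29)}` is a subgroup of `S₆` of order 36,
generated by the permutations `a = (2 3 4)`, `b = (3 4)(5 6)`, `c = (1 2)(3 5)(4 6)`
(written here in 0-indexed form). -/
theorem V229_fan_symmetry_group :
    ∃ H : Subgroup (Equiv.Perm (Fin 6)),
      (H : Set (Equiv.Perm (Fin 6))) = fanSymmetries ∧
      Nat.card H = 36 ∧
      H = Subgroup.closure
        {Equiv.swap (1 : Fin 6) 2 * Equiv.swap 2 3,
         Equiv.swap (2 : Fin 6) 3 * Equiv.swap 4 5,
         Equiv.swap (0 : Fin 6) 1 * Equiv.swap 2 4 * Equiv.swap 3 5} :=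
  ⟨V229.fanSymmetryGroup, rfl, V229.card_fanSymmetryGroup,
    V229.fanSymmetryGroup_eq_closure⟩
end

section
/- The fan symmetries a = (2 3 4) and b = (3 4)(5 6) of V_{(2,29)} are realized by torus actions: for all λ1,…,λ7 ∈ ℂ* and all μ, ν ∈ ℂ* with μ³ = λ2 λ3 λ4⁻² and ν³ = λ3² λ4⁻² λ5⁻¹ λ6, one has, for every t = (t1,t2,t3,t4) ∈ (ℂ*)⁴: f(λ1,…,λ7; t1, λ2⁻¹λ3 t2, λ3⁻¹λ4 t3, μ t4) = f(λ1, λ3, λ4, λ2, λ5, λ6, λ7; t1, t2, t3, t4), and f(λ1,…,λ7; t1, t2, λ3⁻¹λ4 t3, ν t4) = f(λ1, λ2, λ4, λ3, λ6, λ5, λ7; t1, t2, t3, t4). In particular a and b act trivially on the simplified moduli space. -/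
/-!
Rescaling the torus coordinates `t ↦ c * t` multiplies each monomial of `f` by its value at `c`,
so `f(λ; c * t) = f(λ ⊙ m(c); t)`, where `m(c)` is the vector of monomials evaluated at `c`.
It therefore suffices to choose `c` so that `λ ⊙ m(c)` is the permuted coefficient vector;
the conditions on `μ³` and `ν³` are exactly what makes the two cubic monomials come out right.
-/

/-- The generic anticanonical Laurent polynomial of the family `V_{(2,29)}`:
`f(λ; t) = λ1 t1 + λ2 t2 + λ3 t3 + λ4 t2⁻¹ t3⁻¹ + λ5 t1 t2 t3² t4³
          + λ6 t1⁻² t2⁻¹ t3⁻² t4⁻³ + λ7`. -/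
noncomputable def anticanPoly (lam : Fin 7 → ℂ) (t : Fin 4 → ℂ) : ℂ :=
  lam 0 * t 0 + lam 1 * t 1 + lam 2 * t 2 + lam 3 * (t 1)⁻¹ * (t 2)⁻¹ +
    lam 4 * t 0 * t 1 * (t 2)^2 * (t 3)^3 +
    lam 5 * ((t 0)^2)⁻¹ * (t 1)⁻¹ * ((t 2)^2)⁻¹ * ((t 3)^3)⁻¹ + lam 6

def anticanMonomials {K : Type*} [Field K] (t : Fin 4 → K) : Fin 7 → K :=
  ![t 0, t 1, t 2, (t 1)⁻¹ * (t 2)⁻¹, t 0 * t 1 * (t 2)^2 * (t 3)^3,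
    ((t 0)^2)⁻¹ * (t 1)⁻¹ * ((t 2)^2)⁻¹ * ((t 3)^3)⁻¹, 1]

theorem anticanMonomials_mul {K : Type*} [Field K] (c t : Fin 4 → K) :
    anticanMonomials (c * t) = anticanMonomials c * anticanMonomials t := by
  funext j
  fin_cases j <;> simp only [anticanMonomials, Pi.mul_apply, Matrix.cons_val, Fin.zero_eta, Fin.mk_one,
    Fin.reduceFinMk, Fin.isValue] <;> ring

theorem anticanPoly_eq_sum (lam : Fin 7 → ℂ) (t : Fin 4 → ℂ) :
    anticanPoly lam t = ∑ j, lam j * anticanMonomials t j := by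
  rw [Fin.sum_univ_seven]
  simp only [anticanPoly, anticanMonomials, Matrix.cons_val, Fin.isValue]
  ring

theorem anticanPoly_mul_torus (lam : Fin 7 → ℂ) (c t : Fin 4 → ℂ) :
    anticanPoly lam (c * t) = anticanPoly (lam * anticanMonomials c) t := by
  simp only [anticanPoly_eq_sum, anticanMonomials_mul, Pi.mul_apply, mul_assoc]

theorem coeffs_mul_anticanMonomials_eq_fanSymmetryA {l1 l2 l3 l4 l5 l6 l7 μ : ℂ}
    (h2 : l2 ≠ 0) (h3 : l3 ≠ 0) (h4 : l4 ≠ 0) (hμ3 : μ^3 = l2 * l3 * (l4^2)⁻¹) :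
    ![l1, l2, l3, l4, l5, l6, l7] * anticanMonomials ![1, l2⁻¹ * l3, l3⁻¹ * l4, μ]
      = ![l1, l3, l4, l2, l5, l6, l7] := by
  funext j
  fin_cases j <;> simp only [anticanMonomials, Pi.mul_apply, Matrix.cons_val, Fin.zero_eta, Fin.mk_one,
    Fin.reduceFinMk, Fin.isValue, hμ3] <;> field_simp

theorem coeffs_mul_anticanMonomials_eq_fanSymmetryB {l1 l2 l3 l4 l5 l6 l7 ν : ℂ}
    (h3 : l3 ≠ 0) (h4 : l4 ≠ 0) (h5 : l5 ≠ 0) (h6 : l6 ≠ 0)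
    (hν3 : ν^3 = l3^2 * (l4^2)⁻¹ * l5⁻¹ * l6) :
    ![l1, l2, l3, l4, l5, l6, l7] * anticanMonomials ![1, 1, l3⁻¹ * l4, ν]
      = ![l1, l2, l4, l3, l6, l5, l7] := by
  funext j
  fin_cases j <;> simp only [anticanMonomials, Pi.mul_apply, Matrix.cons_val, Fin.zero_eta, Fin.mk_one,
    Fin.reduceFinMk, Fin.isValue, hν3] <;> field_simp

theorem V229_fan_symmetries_are_torus_actions_general
    (l1 l2 l3 l4 l5 l6 l7 μ ν : ℂ)
    (h2 : l2 ≠ 0) (h3 : l3 ≠ 0) (h4 : l4 ≠ 0)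
    (h5 : l5 ≠ 0) (h6 : l6 ≠ 0)
    (hμ3 : μ^3 = l2 * l3 * (l4^2)⁻¹)
    (hν3 : ν^3 = l3^2 * (l4^2)⁻¹ * l5⁻¹ * l6) :
    ∀ t : Fin 4 → ℂ, (∀ i, t i ≠ 0) →
      anticanPoly ![l1, l2, l3, l4, l5, l6, l7]
          ![t 0, l2⁻¹ * l3 * t 1, l3⁻¹ * l4 * t 2, μ * t 3]
        = anticanPoly ![l1, l3, l4, l2, l5, l6, l7] ![t 0, t 1, t 2, t 3] ∧
      anticanPoly ![l1, l2, l3, l4, l5, l6, l7]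
          ![t 0, t 1, l3⁻¹ * l4 * t 2, ν * t 3]
        = anticanPoly ![l1, l2, l4, l3, l6, l5, l7] ![t 0, t 1, t 2, t 3] := by
  intro t _
  have ht : ![t 0, t 1, t 2, t 3] = t := by
    funext i; fin_cases i <;> rfl
  have hA : ![t 0, l2⁻¹ * l3 * t 1, l3⁻¹ * l4 * t 2, μ * t 3]
      = ![1, l2⁻¹ * l3, l3⁻¹ * l4, μ] * t := by
    funext i; fin_cases i <;> simp
  have hB : ![t 0, t 1, l3⁻¹ * l4 * t 2, ν * t 3] = ![1, 1, l3⁻¹ * l4, ν] * t := by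
    funext i; fin_cases i <;> simp
  rw [hA, hB, ht, anticanPoly_mul_torus, anticanPoly_mul_torus,
    coeffs_mul_anticanMonomials_eq_fanSymmetryA h2 h3 h4 hμ3,
    coeffs_mul_anticanMonomials_eq_fanSymmetryB h3 h4 h5 h6 hν3]
  exact ⟨rfl, rfl⟩

/-- The fan symmetries `a = (2 3 4)` and `b = (3 4)(5 6)` of `V_{(2,29)}` are realized
by torus actions; in particular they act trivially on the simplified moduli space. -/
theorem V229_fan_symmetries_are_torus_actions
    (l1 l2 l3 l4 l5 l6 l7 μ ν : ℂ)
    (h1 : l1 ≠ 0) (h2 : l2 ≠ 0) (h3 : l3 ≠ 0) (h4 : l4 ≠ 0)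
    (h5 : l5 ≠ 0) (h6 : l6 ≠ 0) (h7 : l7 ≠ 0) (hμ : μ ≠ 0) (hν : ν ≠ 0)
    (hμ3 : μ^3 = l2 * l3 * (l4^2)⁻¹)
    (hν3 : ν^3 = l3^2 * (l4^2)⁻¹ * l5⁻¹ * l6) :
    ∀ t : Fin 4 → ℂ, (∀ i, t i ≠ 0) →
      anticanPoly ![l1, l2, l3, l4, l5, l6, l7]
          ![t 0, l2⁻¹ * l3 * t 1, l3⁻¹ * l4 * t 2, μ * t 3]
        = anticanPoly ![l1, l3, l4, l2, l5, l6, l7] ![t 0, t 1, t 2, t 3] ∧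
      anticanPoly ![l1, l2, l3, l4, l5, l6, l7]
          ![t 0, t 1, l3⁻¹ * l4 * t 2, ν * t 3]
        = anticanPoly ![l1, l2, l4, l3, l6, l5, l7] ![t 0, t 1, t 2, t 3] :=
  V229_fan_symmetries_are_torus_actions_general l1 l2 l3 l4 l5 l6 l7 μ ν h2 h3 h4 h5 h6 hμ3 hν3
end

section
/- The fan symmetry c = (1 2)(3 5)(4 6) of V_{(2,29)} is generically not realized by a torus action: if λ1,…,λ7 ∈ ℂ* satisfy λ1 λ5 λ6 ≠ λ2 λ3 λ4, then there exist no s1, s2, s3, s4 ∈ ℂ* and μ ∈ ℂ* such that f(λ1,…,λ7; s1 t1, s2 t2, s3 t3, s4 t4) = μ · f(λ2, λ1, λ5, λ6, λ3, λ4, λ7; t1, t2, t3, t4) for all (t1,t2,t3,t4) ∈ (ℂ*)⁴. Consequently the quotient map from simplified to polynomial moduli of V_{(2,29)} has generic degree 2. -/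
open Finset

section TorusCharacter

variable {K ι : Type*} [Field K] [Fintype ι]

def torusCharacter (m : ι → ℤ) : (ι → Kˣ) →* K where
  toFun t := ((∏ i, t i ^ m i : Kˣ) : K)
  map_one' := by simp
  map_mul' t u := by simp [mul_zpow, prod_mul_distrib]

theorem torusCharacter_apply (m : ι → ℤ) (t : ι → Kˣ) :
    torusCharacter m t = ∏ i, (t i : K) ^ m i := by
  simp [torusCharacter]

theorem torusCharacter_mulSingle [DecidableEq ι] (m : ι → ℤ) (i : ι) (x : Kˣ) :
    torusCharacter m (Pi.mulSingle i x) = (x : K) ^ m i := by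
  rw [torusCharacter_apply, prod_eq_single i (fun j _ hj => by simp [Pi.mulSingle_eq_of_ne hj])
    (by simp)]
  simp

theorem two_zpow_injective [CharZero K] : Function.Injective fun n : ℤ ↦ (2 : K) ^ n := by
  intro m n h
  have : ((2 ^ m : ℚ) : K) = ((2 ^ n : ℚ) : K) := by simpa using h
  exact zpow_right_injective₀ (by norm_num : (0 : ℚ) < 2) (by norm_num) (Rat.cast_injective this)

theorem torusCharacter_injective [CharZero K] [DecidableEq ι] :
    Function.Injective (torusCharacter : (ι → ℤ) → (ι → Kˣ) →* K) := by
  intro m n h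
  funext i
  have h2 := DFunLike.congr_fun h (Pi.mulSingle i (Units.mk0 2 two_ne_zero))
  rw [torusCharacter_mulSingle, torusCharacter_mulSingle, Units.val_mk0] at h2
  exact two_zpow_injective h2

theorem eq_of_sum_torusCharacter_eq [CharZero K] [DecidableEq ι] {n : ℕ} {m : Fin n → ι → ℤ}
    (hm : Function.Injective m) {a b : Fin n → K}
    (h : ∀ t, ∑ j, a j * torusCharacter (m j) t = ∑ j, b j * torusCharacter (m j) t) :
    a = b := by
  have hli := (linearIndependent_monoidHom (ι → Kˣ) K).comp _ (torusCharacter_injective.comp hm)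
  funext j
  rw [← sub_eq_zero]
  refine Fintype.linearIndependent_iff.mp hli (a - b) (funext fun t => ?_) j
  simp [Finset.sum_apply, sub_mul, h t]

end TorusCharacter

def anticanExponents : Fin 7 → Fin 4 → ℤ :=
  ![![1, 0, 0, 0], ![0, 1, 0, 0], ![0, 0, 1, 0], ![0, -1, -1, 0], ![1, 1, 2, 3],
    ![-2, -1, -2, -3], 0]

theorem anticanExponents_injective : Function.Injective anticanExponents := by
  decide

theorem anticanPoly_eq_sum_torusCharacter (lam : Fin 7 → ℂ) (t : Fin 4 → ℂˣ) :
    anticanPoly lam (fun i => t i) = ∑ j, lam j * torusCharacter (anticanExponents j) t := by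
  simp only [anticanPoly, anticanExponents, torusCharacter_apply, Fin.sum_univ_seven,
    Fin.prod_univ_four, Matrix.cons_val, Matrix.cons_val_zero, Matrix.cons_val_one, Pi.zero_apply,
    zpow_ofNat, zpow_neg, pow_one, pow_zero, mul_one, one_mul]
  ring

theorem anticanPoly_coeff_eq_of_rescaling {lam lam' : Fin 7 → ℂ} {s : Fin 4 → ℂˣ} {μ : ℂ}
    (h : ∀ t : Fin 4 → ℂˣ,
      anticanPoly lam (fun i => (s * t) i) = μ * anticanPoly lam' (fun i => t i))
    (j : Fin 7) : lam j * torusCharacter (anticanExponents j) s = μ * lam' j := by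
  refine congr_fun (eq_of_sum_torusCharacter_eq
    (a := fun j => lam j * torusCharacter (anticanExponents j) s) (b := fun j => μ * lam' j)
    anticanExponents_injective fun t => ?_) j
  simp_rw [mul_assoc, ← map_mul, ← Finset.mul_sum, ← anticanPoly_eq_sum_torusCharacter]
  exact h t

theorem V229_fan_symmetry_c_not_torus_action_general
    (l1 l2 l3 l4 l5 l6 l7 : ℂ)
    (h7 : l7 ≠ 0)
    (hne : l1 * l5 * l6 ≠ l2 * l3 * l4) :
    ¬ ∃ s1 s2 s3 s4 μ : ℂ, s1 ≠ 0 ∧ s2 ≠ 0 ∧ s3 ≠ 0 ∧ s4 ≠ 0 ∧ μ ≠ 0 ∧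
      ∀ t : Fin 4 → ℂ, (∀ i, t i ≠ 0) →
        anticanPoly ![l1, l2, l3, l4, l5, l6, l7]
            ![s1 * t 0, s2 * t 1, s3 * t 2, s4 * t 3]
          = μ * anticanPoly ![l2, l1, l5, l6, l3, l4, l7] ![t 0, t 1, t 2, t 3] := by
  rintro ⟨s1, s2, s3, s4, μ, hs1, hs2, hs3, hs4, -, h⟩
  set s : Fin 4 → ℂˣ := ![.mk0 s1 hs1, .mk0 s2 hs2, .mk0 s3 hs3, .mk0 s4 hs4]
  have hcoeff := anticanPoly_coeff_eq_of_rescaling (lam := ![l1, l2, l3, l4, l5, l6, l7])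
      (lam' := ![l2, l1, l5, l6, l3, l4, l7]) (s := s) (μ := μ) fun t => by
    have hst : (fun i => ((s * t) i : ℂ)) = ![s1 * t 0, s2 * t 1, s3 * t 2, s4 * t 3] := by
      ext i; fin_cases i <;> simp [s]
    have ht : (fun i => (t i : ℂ)) = ![(t 0 : ℂ), t 1, t 2, t 3] := by
      ext i; fin_cases i <;> rfl
    rw [hst, ht]
    exact h (fun i => t i) fun i => (t i).ne_zero
  have h2 := hcoeff 1
  have h3 := hcoeff 2
  have h4 := hcoeff 3
  have hconst := hcoeff 6
  simp only [torusCharacter_apply, anticanExponents, Fin.prod_univ_four, s, Matrix.cons_val,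
    Matrix.cons_val_zero, Matrix.cons_val_one, Pi.zero_apply, Units.val_mk0, zpow_ofNat, zpow_neg,
    pow_zero, pow_one, prod_const_one, mul_one, one_mul] at h2 h3 h4 hconst
  obtain rfl : μ = 1 := (mul_eq_right₀ h7).mp hconst.symm
  rw [one_mul] at h2 h3 h4
  apply hne
  rw [← h2, ← h3, ← h4]
  field_simp

/-- The fan symmetry `c = (1 2)(3 5)(4 6)` of `V_{(2,29)}` is generically not realized
by a torus action: if `λ1 λ5 λ6 ≠ λ2 λ3 λ4` then no rescaling of the torus coordinates
transforms `f(λ; ·)` into a scalar multiple of `f(c·λ; ·)`. Consequently the quotient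
map from simplified to polynomial moduli of `V_{(2,29)}` has generic degree 2. -/
theorem V229_fan_symmetry_c_not_torus_action
    (l1 l2 l3 l4 l5 l6 l7 : ℂ)
    (h1 : l1 ≠ 0) (h2 : l2 ≠ 0) (h3 : l3 ≠ 0) (h4 : l4 ≠ 0)
    (h5 : l5 ≠ 0) (h6 : l6 ≠ 0) (h7 : l7 ≠ 0)
    (hne : l1 * l5 * l6 ≠ l2 * l3 * l4) :
    ¬ ∃ s1 s2 s3 s4 μ : ℂ, s1 ≠ 0 ∧ s2 ≠ 0 ∧ s3 ≠ 0 ∧ s4 ≠ 0 ∧ μ ≠ 0 ∧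
      ∀ t : Fin 4 → ℂ, (∀ i, t i ≠ 0) →
        anticanPoly ![l1, l2, l3, l4, l5, l6, l7]
            ![s1 * t 0, s2 * t 1, s3 * t 2, s4 * t 3]
          = μ * anticanPoly ![l2, l1, l5, l6, l3, l4, l7] ![t 0, t 1, t 2, t 3] :=
  V229_fan_symmetry_c_not_torus_action_general l1 l2 l3 l4 l5 l6 l7 h7 hne
end
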